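/- arXiv:2208.13030 — 7 statements merged into one kernel-verified Lean document; each statement's English description precedes it below -/
import Mathlib

section
/- Define R_a = ∫₀^a ( √((L−ρ)²/4 − v₀^min) − √(ρ²/4 + v₀(ρ) − v₀^min) ) dρ. If v₀ ≤ 0, v₀^min < 0 and 0 < 2a < L, then 0 < R_a ≤ ((L−a)/2 + √(|v₀^min|)) · a. -/
/-!
Pointwise, `ρ / 2 ≤ √(ρ²/4 + v₀ ρ - v₀^min)` because `v₀ ≥ v₀^min`, and
`√((L - ρ)²/4 - v₀^min) ≤ (L - ρ)/2 + √|v₀^min|`, so the integrand is at most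
`L/2 + √|v₀^min| - ρ`, whose integral over `[0, a]` is the stated bound.
It is positive on `(0, a]` since `v₀ ≤ 0` and `ρ < L - ρ` there.
-/

open Real intervalIntegral

/-- The integrand of `R_a`. -/
noncomputable def remainderIntegrand (v : ℝ → ℝ) (vmin L ρ : ℝ) : ℝ :=
  √((L - ρ) ^ 2 / 4 - vmin) - √(ρ ^ 2 / 4 + v ρ - vmin)

lemma sqrt_sq_div_four_sub_le {x : ℝ} (hx : 0 ≤ x) (c : ℝ) :
    √(x ^ 2 / 4 - c) ≤ x / 2 + √|c| := by
  have hc : -c ≤ √|c| ^ 2 := by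
    rw [sq_sqrt (abs_nonneg c)]
    exact neg_le_abs c
  rw [sqrt_le_iff]
  constructor
  · positivity
  · nlinarith [mul_nonneg hx (sqrt_nonneg |c|)]

lemma half_le_sqrt_sq_div_four_add (x : ℝ) {t : ℝ} (ht : 0 ≤ t) :
    x / 2 ≤ √(x ^ 2 / 4 + t) :=
  le_sqrt_of_sq_le (by linarith)

lemma integral_const_sub_id (c a : ℝ) : ∫ ρ in (0:ℝ)..a, (c - ρ) = (c - a / 2) * a := by
  rw [integral_sub intervalIntegrable_const intervalIntegrable_id, integral_const, integral_id]
  simp only [smul_eq_mul]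
  ring

section Integrand

variable {v : ℝ → ℝ} {vmin L ρ : ℝ}

lemma continuous_remainderIntegrand (hv : Continuous v) :
    Continuous (remainderIntegrand v vmin L) := by
  unfold remainderIntegrand
  fun_prop

lemma remainderIntegrand_pos (hmin : vmin ≤ v ρ) (hneg : v ρ ≤ 0) (hρ : 0 ≤ ρ)
    (hρL : 2 * ρ < L) : 0 < remainderIntegrand v vmin L ρ := by
  have hlt : ρ ^ 2 / 4 + v ρ - vmin < (L - ρ) ^ 2 / 4 - vmin := by nlinarith
  have := sqrt_lt_sqrt (by nlinarith [sq_nonneg ρ]) hlt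
  unfold remainderIntegrand
  linarith

lemma remainderIntegrand_le (hmin : vmin ≤ v ρ) (hρL : ρ ≤ L) :
    remainderIntegrand v vmin L ρ ≤ L / 2 + √|vmin| - ρ := by
  have h₁ := sqrt_sq_div_four_sub_le (sub_nonneg.2 hρL) vmin
  have h₂ := half_le_sqrt_sq_div_four_add ρ (sub_nonneg.2 hmin)
  rw [← add_sub_assoc] at h₂
  unfold remainderIntegrand
  linarith

end Integrand

theorem stmt1_general (v₀ : ℝ → ℝ) (vmin : ℝ) (a L : ℝ)
    (hcont : Continuous v₀)
    (hneg : ∀ r ≥ (0:ℝ), v₀ r ≤ 0)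
    (hmin : ∀ r ≥ (0:ℝ), vmin ≤ v₀ r)
    (ha : 0 < a) (hL : 2 * a < L) :
    0 < ∫ ρ in (0:ℝ)..a,
        (Real.sqrt ((L - ρ) ^ 2 / 4 - vmin) - Real.sqrt (ρ ^ 2 / 4 + v₀ ρ - vmin)) ∧
    (∫ ρ in (0:ℝ)..a,
        (Real.sqrt ((L - ρ) ^ 2 / 4 - vmin) - Real.sqrt (ρ ^ 2 / 4 + v₀ ρ - vmin)))
      ≤ ((L - a) / 2 + Real.sqrt |vmin|) * a := by
  change 0 < ∫ ρ in (0:ℝ)..a, remainderIntegrand v₀ vmin L ρ ∧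
    ∫ ρ in (0:ℝ)..a, remainderIntegrand v₀ vmin L ρ ≤ ((L - a) / 2 + √|vmin|) * a
  have hint : IntervalIntegrable (remainderIntegrand v₀ vmin L) MeasureTheory.volume 0 a :=
    (continuous_remainderIntegrand hcont).intervalIntegrable 0 a
  constructor
  · refine intervalIntegral_pos_of_pos_on hint (fun ρ hρ => ?_) ha
    exact remainderIntegrand_pos (hmin ρ hρ.1.le) (hneg ρ hρ.1.le) hρ.1.le (by linarith [hρ.2])
  · calc ∫ ρ in (0:ℝ)..a, remainderIntegrand v₀ vmin L ρ
        ≤ ∫ ρ in (0:ℝ)..a, (L / 2 + √|vmin| - ρ) :=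
          integral_mono_on ha.le hint (intervalIntegrable_const.sub intervalIntegrable_id)
            fun ρ hρ => remainderIntegrand_le (hmin ρ hρ.1) (by linarith [hρ.2])
      _ = ((L - a) / 2 + √|vmin|) * a := by rw [integral_const_sub_id]; ring

/-- bounds on the remainder `R_a`. -/
theorem stmt1 (v₀ : ℝ → ℝ) (vmin : ℝ) (a L : ℝ)
    (hcont : Continuous v₀)
    (hneg : ∀ r ≥ (0:ℝ), v₀ r ≤ 0)
    (hmin : ∀ r ≥ (0:ℝ), vmin ≤ v₀ r) (hvmin : vmin < 0)
    (hsupp : ∀ r ≥ a, v₀ r = 0)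
    (ha : 0 < a) (hL : 2 * a < L) :
    0 < ∫ ρ in (0:ℝ)..a,
        (Real.sqrt ((L - ρ) ^ 2 / 4 - vmin) - Real.sqrt (ρ ^ 2 / 4 + v₀ ρ - vmin)) ∧
    (∫ ρ in (0:ℝ)..a,
        (Real.sqrt ((L - ρ) ^ 2 / 4 - vmin) - Real.sqrt (ρ ^ 2 / 4 + v₀ ρ - vmin)))
      ≤ ((L - a) / 2 + Real.sqrt |vmin|) * a :=
  stmt1_general v₀ vmin a L hcont hneg hmin ha hL
end

section
/- Assume additionally that v₀(u) < L(L−2a)/4 for all u ∈ (0,a). Then with d as above and S_a = d(a) + d(L−a), one has S_a = inf_{0<u<a} ( d(u) + d(L−u) ); in fact the function φ(u) = d(u) + d(L−u) is strictly decreasing on (0,a). -/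
open Real Set

/-- under `v₀ < L(L-2a)/4`, the map `u ↦ d(u) + d(L-u)` is strictly
decreasing on `(0,a)` with infimum `S_a = d(a) + d(L-a)`. -/
theorem stmt3 (v₀ : ℝ → ℝ) (vmin : ℝ) (a L : ℝ)
    (hsmooth : ContDiff ℝ (⊤ : ℕ∞) v₀)
    (hmin : ∀ r ≥ (0:ℝ), vmin ≤ v₀ r) (hvmin : vmin < 0)
    (hsupp : ∀ r ≥ a, v₀ r = 0)
    (ha : 0 < a) (hL : 2 * a < L)
    (hv : ∀ u ∈ Set.Ioo (0:ℝ) a, v₀ u < L * (L - 2 * a) / 4)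
    (d : ℝ → ℝ)
    (hd : ∀ r, d r = ∫ ρ in (0:ℝ)..r, Real.sqrt (ρ ^ 2 / 4 + v₀ ρ - vmin)) :
    StrictAntiOn (fun u => d u + d (L - u)) (Set.Ioo 0 a) ∧
    sInf ((fun u => d u + d (L - u)) '' Set.Ioo 0 a) = d a + d (L - a) := by
  set f : ℝ → ℝ := fun ρ => Real.sqrt (ρ ^ 2 / 4 + v₀ ρ - vmin) with hf_def
  have hf_cont : Continuous f := by
    apply Real.continuous_sqrt.comp
    exact ((continuous_pow 2).div_const 4).add hsmooth.continuous |>.sub continuous_const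
  have hfi : ∀ x y : ℝ, IntervalIntegrable f MeasureTheory.volume x y :=
    fun x y => hf_cont.intervalIntegrable x y
  set c : ℝ := Real.sqrt ((L - a) ^ 2 / 4 - vmin) with hc_def
  -- pointwise bounds
  have hbound1 : ∀ ρ, 0 < ρ → ρ ≤ a → f ρ < c := by
    intro ρ hρ0 hρa
    apply Real.sqrt_lt_sqrt
    · have := hmin ρ hρ0.le
      nlinarith
    · rcases lt_or_eq_of_le hρa with h | h
      · have h1 := hv ρ ⟨hρ0, h⟩
        nlinarith
      · subst h
        have h0 := hsupp ρ le_rfl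
        rw [h0]
        nlinarith
  have hbound2 : ∀ σ, L - a ≤ σ → c ≤ f σ := by
    intro σ hσ
    have hσa : a ≤ σ := by linarith
    have h0 := hsupp σ hσa
    apply Real.sqrt_le_sqrt
    rw [h0]
    nlinarith
  -- key strict inequality
  have hkey : ∀ u₁ u₂ : ℝ, 0 < u₁ → u₁ < u₂ → u₂ ≤ a →
      d u₂ + d (L - u₂) < d u₁ + d (L - u₁) := by
    intro u₁ u₂ h0 h12 h2a
    have e1 : d u₂ - d u₁ = ∫ ρ in u₁..u₂, f ρ := by
      rw [hd, hd]
      exact intervalIntegral.integral_interval_sub_left (hfi 0 u₂) (hfi 0 u₁)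
    have e2 : d (L - u₁) - d (L - u₂) = ∫ ρ in (L - u₂)..(L - u₁), f ρ := by
      rw [hd, hd]
      exact intervalIntegral.integral_interval_sub_left (hfi 0 (L - u₁)) (hfi 0 (L - u₂))
    have hstep1 : (∫ ρ in u₁..u₂, f ρ) < (u₂ - u₁) * c := by
      have := intervalIntegral.integral_lt_integral_of_continuousOn_of_le_of_exists_lt
        (f := f) (g := fun _ => c) h12 hf_cont.continuousOn continuousOn_const
        (fun x hx => (hbound1 x (h0.trans hx.1) (hx.2.trans h2a)).le)
        ⟨u₂, ⟨h12.le, le_rfl⟩, hbound1 u₂ (h0.trans h12) h2a⟩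
      simpa using this
    have hstep2 : (u₂ - u₁) * c ≤ ∫ ρ in (L - u₂)..(L - u₁), f ρ := by
      have hle : L - u₂ ≤ L - u₁ := by linarith
      have := intervalIntegral.integral_mono_on (f := fun _ => c) (g := f)
        (μ := MeasureTheory.volume) hle (intervalIntegrable_const) (hfi _ _)
        (fun x hx => hbound2 x (by linarith [hx.1]))
      simpa using this
    linarith
  have hanti : StrictAntiOn (fun u => d u + d (L - u)) (Set.Ioo 0 a) :=
    fun u₁ h₁ u₂ h₂ h12 => hkey u₁ u₂ h₁.1 h12 h₂.2.le
  refine ⟨hanti, ?_⟩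
  -- continuity of d
  have hdc : Continuous d := by
    have : d = fun r => ∫ ρ in (0:ℝ)..r, f ρ := funext hd
    rw [this]
    exact intervalIntegral.continuous_primitive hfi 0
  have hφc : Continuous (fun u => d u + d (L - u)) :=
    hdc.add (hdc.comp (continuous_const.sub continuous_id))
  set φ : ℝ → ℝ := fun u => d u + d (L - u) with hφ_def
  have hne : (φ '' Set.Ioo 0 a).Nonempty :=
    ⟨φ (a / 2), ⟨a / 2, ⟨by linarith, by linarith⟩, rfl⟩⟩
  have hlb : ∀ x ∈ φ '' Set.Ioo 0 a, φ a ≤ x := by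
    rintro x ⟨u, hu, rfl⟩
    exact (hkey u a hu.1 hu.2 le_rfl).le
  have hbdd : BddBelow (φ '' Set.Ioo 0 a) := ⟨φ a, hlb⟩
  refine le_antisymm ?_ (le_csInf hne hlb)
  -- sInf ≤ φ a  via continuity
  rw [Real.sInf_le_iff hbdd hne]
  intro ε hε
  have hca : ContinuousAt φ a := hφc.continuousAt
  rw [Metric.continuousAt_iff] at hca
  obtain ⟨δ, hδ, hball⟩ := hca ε hε
  set u : ℝ := max (a / 2) (a - δ / 2) with hu_def
  have hu1 : 0 < u := lt_max_of_lt_left (by linarith)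
  have hu2 : u < a := max_lt (by linarith) (by linarith)
  have hdist : dist u a < δ := by
    rw [Real.dist_eq, abs_lt]
    constructor
    · have : a - δ / 2 ≤ u := le_max_right _ _
      linarith
    · linarith
  have := hball hdist
  rw [Real.dist_eq, abs_lt] at this
  have hφa : φ a = d a + d (L - a) := rfl
  exact ⟨φ u, ⟨u, ⟨hu1, hu2⟩, rfl⟩, by linarith [this.2]⟩
end

section
/- Define g(r,ε) = (1−ε)Lr/2 + d(√((L−r)² + 2εLr)) + d(r) for r ∈ [0,a], ε ∈ [0,1]. Then for every fixed r ∈ [0,a], the map ε ↦ g(r,ε) is nondecreasing on [0,1]; consequently inf_{ε∈(0,1]} inf_{0<r<a} g(r,ε) = inf_{0<r<a} g(r,0) = Ŝ. -/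
open Real Set

/-- `ε ↦ g(r,ε)` is nondecreasing on `[0,1]` for each fixed `r ∈ [0,a]`,
and consequently the infimum over `ε ∈ (0,1]` and `r ∈ (0,a)` of `g(r,ε)` equals
`Ŝ = inf_{0<r<a} g(r,0)`. -/
theorem stmt6 (v₀ : ℝ → ℝ) (vmin : ℝ) (a L : ℝ)
    (hsmooth : ContDiff ℝ (⊤ : ℕ∞) v₀)
    (hmin : ∀ r ≥ (0:ℝ), vmin ≤ v₀ r) (hvmin : vmin < 0)
    (hsupp : ∀ r ≥ a, v₀ r = 0)
    (ha : 0 < a) (hL : 2 * a < L)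
    (d : ℝ → ℝ)
    (hd : ∀ r, d r = ∫ ρ in (0:ℝ)..r, Real.sqrt (ρ ^ 2 / 4 + v₀ ρ - vmin))
    (g : ℝ → ℝ → ℝ)
    (hg : ∀ r ε, g r ε =
      (1 - ε) * L * r / 2 + d (Real.sqrt ((L - r) ^ 2 + 2 * ε * L * r)) + d r) :
    (∀ r ∈ Set.Icc (0:ℝ) a, MonotoneOn (fun ε => g r ε) (Set.Icc 0 1)) ∧
    sInf {x : ℝ | ∃ ε ∈ Set.Ioc (0:ℝ) 1, ∃ r ∈ Set.Ioo (0:ℝ) a, x = g r ε} =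
      sInf {x : ℝ | ∃ r ∈ Set.Ioo (0:ℝ) a, x = g r 0} := by
  have hL0 : (0:ℝ) < L := by linarith
  set f : ℝ → ℝ := fun ρ => Real.sqrt (ρ ^ 2 / 4 + v₀ ρ - vmin) with hf
  have hfc : Continuous f := by
    apply Real.continuous_sqrt.comp
    exact ((continuous_pow 2).div_const 4).add (hsmooth.continuous) |>.sub continuous_const
  have hfi : ∀ x y : ℝ, IntervalIntegrable f MeasureTheory.volume x y :=
    fun x y => hfc.intervalIntegrable x y
  have hde : d = fun x => ∫ ρ in (0:ℝ)..x, f ρ := funext hd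
  have hdc : Continuous d := by
    rw [hde]; exact intervalIntegral.continuous_primitive hfi 0
  -- d is nonneg on [0,∞)
  have hdnn : ∀ x : ℝ, 0 ≤ x → 0 ≤ d x := by
    intro x hx
    rw [hd]
    exact intervalIntegral.integral_nonneg hx (fun ρ _ => Real.sqrt_nonneg _)
  -- key monotonicity
  have hmono : ∀ r ∈ Set.Icc (0:ℝ) a, MonotoneOn (fun ε => g r ε) (Set.Icc 0 1) := by
    intro r hr ε₁ hε₁ ε₂ hε₂ hε
    obtain ⟨hr0, hra⟩ := hr
    set s : ℝ → ℝ := fun ε => Real.sqrt ((L - r) ^ 2 + 2 * ε * L * r) with hs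
    have harg : ∀ ε : ℝ, 0 ≤ ε → 0 ≤ (L - r) ^ 2 + 2 * ε * L * r := by
      intro ε hε0
      have : 0 ≤ 2 * ε * L * r := by positivity
      nlinarith [sq_nonneg (L - r)]
    have hsq : ∀ ε : ℝ, 0 ≤ ε → (s ε) ^ 2 = (L - r) ^ 2 + 2 * ε * L * r := by
      intro ε hε0; exact Real.sq_sqrt (harg ε hε0)
    have hs1 : 0 ≤ s ε₁ := Real.sqrt_nonneg _
    have hs12 : s ε₁ ≤ s ε₂ := by
      apply Real.sqrt_le_sqrt
      nlinarith [mul_nonneg (sub_nonneg.mpr hε) (mul_nonneg hL0.le hr0)]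
    -- d (s ε₂) - d (s ε₁) ≥ (s ε₂)^2/4 - (s ε₁)^2/4
    have hint : d (s ε₂) - d (s ε₁) = ∫ ρ in (s ε₁)..(s ε₂), f ρ := by
      rw [hd, hd, hf]
      rw [← intervalIntegral.integral_interval_sub_left (hfi 0 (s ε₂)) (hfi 0 (s ε₁))]
    have hlow : (∫ ρ in (s ε₁)..(s ε₂), ρ / 2) ≤ ∫ ρ in (s ε₁)..(s ε₂), f ρ := by
      apply intervalIntegral.integral_mono_on hs12
      · exact (continuous_id.div_const 2).intervalIntegrable _ _
      · exact hfi _ _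
      · intro x hx
        have hx0 : 0 ≤ x := le_trans hs1 hx.1
        have : x / 2 = Real.sqrt (x ^ 2 / 4) := by
          rw [show x ^ 2 / 4 = (x / 2) ^ 2 by ring, Real.sqrt_sq (by positivity)]
        rw [this, hf]
        apply Real.sqrt_le_sqrt
        have := hmin x hx0
        linarith
    have hid : (∫ ρ in (s ε₁)..(s ε₂), ρ / 2) = ((s ε₂) ^ 2 - (s ε₁) ^ 2) / 4 := by
      have : (∫ ρ in (s ε₁)..(s ε₂), ρ / 2) = (∫ ρ in (s ε₁)..(s ε₂), ρ) / 2 := by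
        simp [intervalIntegral.integral_div]
      rw [this, integral_id]; ring
    have hdiff : (s ε₂) ^ 2 - (s ε₁) ^ 2 = 2 * (ε₂ - ε₁) * L * r := by
      rw [hsq ε₁ hε₁.1, hsq ε₂ hε₂.1]; ring
    simp only [hg]
    have key : (ε₂ - ε₁) * L * r / 2 ≤ d (s ε₂) - d (s ε₁) := by
      rw [hint] at *
      calc (ε₂ - ε₁) * L * r / 2 = ((s ε₂) ^ 2 - (s ε₁) ^ 2) / 4 := by rw [hdiff]; ring
        _ = ∫ ρ in (s ε₁)..(s ε₂), ρ / 2 := hid.symm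
        _ ≤ _ := hlow
    have hseq : ∀ ε, Real.sqrt ((L - r) ^ 2 + 2 * ε * L * r) = s ε := fun _ => rfl
    rw [hseq, hseq]
    linarith
  refine ⟨hmono, ?_⟩
  set A := {x : ℝ | ∃ ε ∈ Set.Ioc (0:ℝ) 1, ∃ r ∈ Set.Ioo (0:ℝ) a, x = g r ε} with hA
  set B := {x : ℝ | ∃ r ∈ Set.Ioo (0:ℝ) a, x = g r 0} with hB
  have hgnn : ∀ r ∈ Set.Ioo (0:ℝ) a, ∀ ε ∈ Set.Icc (0:ℝ) 1, 0 ≤ g r ε := by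
    intro r hr ε hε
    rw [hg]
    have h1 : 0 ≤ (1 - ε) * L * r / 2 := by
      have h1e : 0 ≤ 1 - ε := by linarith [hε.2]
      have := mul_nonneg (mul_nonneg h1e hL0.le) hr.1.le
      linarith
    have h2 : 0 ≤ d (Real.sqrt ((L - r) ^ 2 + 2 * ε * L * r)) :=
      hdnn _ (Real.sqrt_nonneg _)
    have h3 : 0 ≤ d r := hdnn r hr.1.le
    linarith
  have hBnn : ∀ x ∈ B, (0:ℝ) ≤ x := by
    rintro x ⟨r, hr, rfl⟩
    exact hgnn r hr 0 ⟨le_refl 0, zero_le_one⟩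
  have hAnn : ∀ x ∈ A, (0:ℝ) ≤ x := by
    rintro x ⟨ε, hε, r, hr, rfl⟩
    exact hgnn r hr ε ⟨hε.1.le, hε.2⟩
  have hBne : B.Nonempty := ⟨g (a/2) 0, a/2, ⟨by positivity, by linarith⟩, rfl⟩
  have hAne : A.Nonempty := ⟨g (a/2) 1, 1, ⟨one_pos, le_refl 1⟩, a/2, ⟨by positivity, by linarith⟩, rfl⟩
  have hBbdd : BddBelow B := ⟨0, hBnn⟩
  have hAbdd : BddBelow A := ⟨0, hAnn⟩
  apply le_antisymm
  · -- sInf A ≤ sInf B: for each b = g r 0, g r (1/(n+1)) → g r 0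
    apply le_csInf hBne
    rintro x ⟨r, hr, rfl⟩
    have hrIcc : r ∈ Set.Icc (0:ℝ) a := ⟨hr.1.le, hr.2.le⟩
    have hcont : ContinuousAt (fun ε => g r ε) 0 := by
      have : (fun ε => g r ε) = fun ε =>
          (1 - ε) * L * r / 2 + d (Real.sqrt ((L - r) ^ 2 + 2 * ε * L * r)) + d r := by
        funext ε; exact hg r ε
      rw [this]
      apply Continuous.continuousAt
      fun_prop
    have htend : Filter.Tendsto (fun n : ℕ => g r (1 / (n + 1))) Filter.atTop
        (nhds (g r 0)) :=
      hcont.tendsto.comp tendsto_one_div_add_atTop_nhds_zero_nat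
    refine ge_of_tendsto htend (Filter.Eventually.of_forall fun n => ?_)
    apply csInf_le hAbdd
    refine ⟨1 / (n + 1), ⟨by positivity, ?_⟩, r, hr, rfl⟩
    rw [div_le_one (by positivity)]
    have : (0:ℝ) ≤ (n:ℝ) := Nat.cast_nonneg n
    linarith
  · -- sInf B ≤ sInf A
    apply le_csInf hAne
    rintro x ⟨ε, hε, r, hr, rfl⟩
    have hrIcc : r ∈ Set.Icc (0:ℝ) a := ⟨hr.1.le, hr.2.le⟩
    have h1 : g r 0 ≤ g r ε :=
      hmono r hrIcc ⟨le_refl 0, zero_le_one⟩ ⟨hε.1.le, hε.2⟩ hε.1.le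
    have h2 : sInf B ≤ g r 0 := csInf_le hBbdd ⟨r, hr, rfl⟩
    linarith
end

section
/- Fix a < L and v < 0, and let g(s) = (L²+a²)s − |v| − La√(s(4s+1)) for s > 0. Then g has a unique positive zero, namely s₊ = [2|v|(L²+a²) + L²a²]/(2(L²−a²)²) + (1/(L²−a²))·√( (2|v|(L²+a²)+L²a²)²/(4(L²−a²)²) − |v|² ), and g < 0 on (0,s₊), g > 0 on (s₊,∞). -/
open Real

/-!
Write `P = L² + a²`. Where `P s > |v|`, both terms of `g s = (P s - |v|) - La√(s(4s+1))` are
nonnegative, so `g s` has the sign of the difference of their squares, which is the quadratic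
`q s = (L² - a²)² s² - (2|v|P + L²a²) s + |v|²`. At `s₀ = |v| / P` the linear term vanishes and
`q s₀ = -L²a² s₀(4s₀ + 1) < 0`, so `s₀` lies strictly between the roots of `q`; hence for `s > s₀`
the sign of `g s` is that of `s - s₊`, with `s₊` the larger root. For `0 < s ≤ s₀`, `g s < 0`
trivially.
-/

section Quadratic

variable {A B C : ℝ}

theorem discrim_pos_of_quadratic_neg (hA : 0 < A) {x : ℝ} (hx : A * x ^ 2 - B * x + C < 0) :
    0 < B ^ 2 - 4 * A * C := by
  nlinarith [sq_nonneg (2 * A * x - B)]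

theorem quadratic_eq_mul_sub_mul_sub (hA : A ≠ 0) (hD : 0 ≤ B ^ 2 - 4 * A * C) (x : ℝ) :
    A * x ^ 2 - B * x + C =
      A * (x - (B + √(B ^ 2 - 4 * A * C)) / (2 * A)) *
        (x - (B - √(B ^ 2 - 4 * A * C)) / (2 * A)) := by
  have hsq := sq_sqrt hD
  set δ := √(B ^ 2 - 4 * A * C)
  field_simp
  linear_combination hsq

theorem quadratic_roots_lt_lt_of_neg (hA : 0 < A) {x : ℝ} (hx : A * x ^ 2 - B * x + C < 0) :
    (B - √(B ^ 2 - 4 * A * C)) / (2 * A) < x ∧ x < (B + √(B ^ 2 - 4 * A * C)) / (2 * A) := by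
  have hD := (discrim_pos_of_quadratic_neg hA hx).le
  rw [quadratic_eq_mul_sub_mul_sub hA.ne' hD] at hx
  set r := (B + √(B ^ 2 - 4 * A * C)) / (2 * A)
  set r' := (B - √(B ^ 2 - 4 * A * C)) / (2 * A)
  have hroots : r' ≤ r :=
    div_le_div_of_nonneg_right (by linarith [sqrt_nonneg (B ^ 2 - 4 * A * C)]) (by positivity)
  constructor
  · by_contra! h
    nlinarith [mul_nonneg (sub_nonneg.2 h) (sub_nonneg.2 (h.trans hroots))]
  · by_contra! h
    nlinarith [mul_nonneg (sub_nonneg.2 h) (sub_nonneg.2 (hroots.trans h))]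

theorem sign_quadratic_of_lt (hA : 0 < A) (hD : 0 ≤ B ^ 2 - 4 * A * C) {x : ℝ}
    (hx : (B - √(B ^ 2 - 4 * A * C)) / (2 * A) < x) :
    SignType.sign (A * x ^ 2 - B * x + C) =
      SignType.sign (x - (B + √(B ^ 2 - 4 * A * C)) / (2 * A)) := by
  rw [quadratic_eq_mul_sub_mul_sub hA.ne' hD, mul_right_comm, sign_mul, sign_mul, sign_pos hA,
    sign_pos (sub_pos.mpr hx), one_mul, one_mul]

end Quadratic

theorem sign_sub_mul_sqrt {X K Z : ℝ} (hX : 0 ≤ X) (hK : 0 ≤ K) (hZ : 0 ≤ Z) :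
    SignType.sign (X - K * √Z) = SignType.sign (X ^ 2 - K ^ 2 * Z) := by
  have hfactor : X ^ 2 - K ^ 2 * Z = (X - K * √Z) * (X + K * √Z) := by
    linear_combination K ^ 2 * sq_sqrt hZ
  have hKZ : 0 ≤ K * √Z := mul_nonneg hK (sqrt_nonneg Z)
  rcases (add_nonneg hX hKZ).eq_or_lt with hzero | hpos
  · rw [hfactor, ← hzero, mul_zero, show X = 0 by linarith, show K * √Z = 0 by linarith]
    simp
  · rw [hfactor, sign_mul, sign_pos hpos, mul_one]

theorem add_inv_mul_sqrt_eq_quadratic_root {M : ℝ} (hM : 0 < M) (B C : ℝ) :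
    B / (2 * M ^ 2) + 1 / M * √(B ^ 2 / (4 * M ^ 2) - C) =
      (B + √(B ^ 2 - 4 * M ^ 2 * C)) / (2 * M ^ 2) := by
  have hrad : B ^ 2 / (4 * M ^ 2) - C = (B ^ 2 - 4 * M ^ 2 * C) / (2 * M) ^ 2 := by
    field_simp
    ring
  rw [hrad, sqrt_div' _ (sq_nonneg _), sqrt_sq (by positivity)]
  field_simp

/-- the function `g(s) = (L²+a²)s - |v| - La√(s(4s+1))` has a unique
positive zero `s₊`, is negative on `(0,s₊)` and positive on `(s₊,∞)`. -/
theorem stmt16 (a L v : ℝ) (ha : 0 < a) (haL : a < L) (hv : v < 0)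
    (g : ℝ → ℝ)
    (hg : ∀ s, g s = (L ^ 2 + a ^ 2) * s - |v| - L * a * Real.sqrt (s * (4 * s + 1)))
    (sp : ℝ)
    (hsp : sp = (2 * |v| * (L ^ 2 + a ^ 2) + L ^ 2 * a ^ 2) / (2 * (L ^ 2 - a ^ 2) ^ 2) +
      (1 / (L ^ 2 - a ^ 2)) * Real.sqrt
        ((2 * |v| * (L ^ 2 + a ^ 2) + L ^ 2 * a ^ 2) ^ 2 / (4 * (L ^ 2 - a ^ 2) ^ 2)
          - |v| ^ 2)) :
    g sp = 0 ∧ (∀ s ∈ Set.Ioo (0:ℝ) sp, g s < 0) ∧ (∀ s > sp, 0 < g s) := by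
  have hLa : 0 < L * a := mul_pos (ha.trans haL) ha
  have hP : 0 < L ^ 2 + a ^ 2 := by positivity
  have hM : 0 < L ^ 2 - a ^ 2 := by nlinarith
  have hV : 0 < |v| := abs_pos.mpr hv.ne
  set V := |v|
  set B := 2 * V * (L ^ 2 + a ^ 2) + L ^ 2 * a ^ 2
  have hsquare (s : ℝ) : ((L ^ 2 + a ^ 2) * s - V) ^ 2 - (L * a) ^ 2 * (s * (4 * s + 1)) =
      (L ^ 2 - a ^ 2) ^ 2 * s ^ 2 - B * s + V ^ 2 := by
    ring
  set s₀ := V / (L ^ 2 + a ^ 2)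
  have hs₀ : 0 < s₀ := div_pos hV hP
  have hq₀ : (L ^ 2 - a ^ 2) ^ 2 * s₀ ^ 2 - B * s₀ + V ^ 2 < 0 := by
    rw [← hsquare, mul_div_cancel₀ V hP.ne', sub_self]
    have : 0 < (L * a) ^ 2 * (s₀ * (4 * s₀ + 1)) := by positivity
    linarith
  have hD := (discrim_pos_of_quadratic_neg (by positivity) hq₀).le
  obtain ⟨hroot_lt, hlt_sp⟩ := quadratic_roots_lt_lt_of_neg (by positivity) hq₀
  rw [add_inv_mul_sqrt_eq_quadratic_root hM] at hsp
  rw [← hsp] at hlt_sp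
  have hsign (s : ℝ) (hs : s₀ < s) : SignType.sign (g s) = SignType.sign (s - sp) := by
    have hVs : V < (L ^ 2 + a ^ 2) * s := (div_lt_iff₀' hP).mp hs
    rw [hg, sign_sub_mul_sqrt (by linarith) hLa.le (by nlinarith), hsquare,
      sign_quadratic_of_lt (by positivity) hD (hroot_lt.trans hs), hsp]
  refine ⟨?_, fun s ⟨hs, hs_sp⟩ => ?_, fun s hs => ?_⟩
  · simpa using hsign sp hlt_sp
  · rcases le_or_gt s s₀ with hle | hgt
    · have hVs : (L ^ 2 + a ^ 2) * s ≤ V := (le_div_iff₀' hP).mp hle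
      have : 0 < L * a * √(s * (4 * s + 1)) := by positivity
      rw [hg]
      linarith
    · simpa [sign_eq_neg_one_iff, hs_sp] using hsign s hgt
  · simpa [sign_eq_one_iff, hs] using hsign s (hlt_sp.trans hs)
end

section
/- Let Ψ(a,t) = d(a) + ((a²+L²)/4)(2t+1) + (|v₀^min|/2)ln(1+1/t) − La√(t(t+1)) for t > 0, with 0 < 2a < L. Then t ↦ Ψ(a,t) attains its minimum at the unique point t_a = −1/2 + √(1/4 + s₊), where s₊ is the unique positive root of (L²−a²)²s² − (2(L²+a²)|v₀^min| + L²a²)s + |v₀^min|² = 0 satisfying (L²+a²)s − |v₀^min| > 0. -/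
open Real Set

/-!
With `s = t(t+1)` one finds `Ψ'(t) = g(s) / (2s)`, where `g(s) = A s - c - b √(s(4s+1))`,
`A = L² + a²`, `b = L a`, `c = |v₀^min|`. Where `A s > c`, the sign of `g(s)` is the sign of
`(A s - c)² - b² s(4s+1)`, which is the quadratic of the statement. That quadratic is negative
at `s = c / A`, so `s₊ > c / A` is its larger root, and `g < 0` on `(0, s₊)`, `g > 0` on
`(s₊, ∞)`. Hence `Ψ` decreases strictly up to `t_a` (the positive solution of `t(t+1) = s₊`)
and increases strictly after it.
-/

theorem lt_of_hasDerivAt_neg_of_pos {f f' : ℝ → ℝ} {a x₀ : ℝ} (hx₀ : a < x₀)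
    (hf : ∀ x, a < x → HasDerivAt f (f' x) x) (hneg : ∀ x, a < x → x < x₀ → f' x < 0)
    (hpos : ∀ x, x₀ < x → 0 < f' x) {x : ℝ} (hx : a < x) (hne : x ≠ x₀) :
    f x₀ < f x := by
  have hcont : ContinuousOn f (Ioi a) := fun y hy => (hf y hy).continuousAt.continuousWithinAt
  rcases hne.lt_or_gt with hlt | hgt
  · refine strictAntiOn_of_deriv_neg (convex_Ioc a x₀) (hcont.mono Ioc_subset_Ioi_self)
      (fun y hy => ?_) ⟨hx, hlt.le⟩ ⟨hx₀, le_rfl⟩ hlt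
    rw [interior_Ioc] at hy
    rw [(hf y hy.1).deriv]
    exact hneg y hy.1 hy.2
  · refine strictMonoOn_of_deriv_pos (convex_Ici x₀) (hcont.mono fun y hy => hx₀.trans_le hy)
      (fun y hy => ?_) self_mem_Ici hgt.le hgt
    rw [interior_Ici] at hy
    rw [(hf y (hx₀.trans hy)).deriv]
    exact hpos y hy

section Quadratic

variable {α β γ p r s : ℝ}

private lemma quadratic_eq_mul_of_root (hr : α * r ^ 2 + β * r + γ = 0) :
    α * s ^ 2 + β * s + γ = (s - r) * (α * (s + r) + β) := by
  linear_combination hr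

private lemma quadratic_slope_pos (hα : 0 < α) (hp : α * p ^ 2 + β * p + γ < 0)
    (hr : α * r ^ 2 + β * r + γ = 0) (hpr : p ≤ r) (hps : p ≤ s) :
    0 < α * (s + r) + β := by
  rw [quadratic_eq_mul_of_root hr] at hp
  have hpr' : p < r := lt_of_le_of_ne hpr (by rintro rfl; simp at hp)
  have : 0 < α * (p + r) + β := pos_of_mul_neg_right hp (by linarith)
  nlinarith

theorem quadratic_neg_of_le_of_lt_root (hα : 0 < α) (hp : α * p ^ 2 + β * p + γ < 0)
    (hr : α * r ^ 2 + β * r + γ = 0) (hps : p ≤ s) (hsr : s < r) :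
    α * s ^ 2 + β * s + γ < 0 := by
  rw [quadratic_eq_mul_of_root hr]
  exact mul_neg_of_neg_of_pos (by linarith) (quadratic_slope_pos hα hp hr (hps.trans hsr.le) hps)

theorem quadratic_pos_of_root_lt (hα : 0 < α) (hp : α * p ^ 2 + β * p + γ < 0)
    (hr : α * r ^ 2 + β * r + γ = 0) (hpr : p ≤ r) (hrs : r < s) :
    0 < α * s ^ 2 + β * s + γ := by
  rw [quadratic_eq_mul_of_root hr]
  exact mul_pos (by linarith) (quadratic_slope_pos hα hp hr hpr (hpr.trans hrs.le))

end Quadratic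

noncomputable def psi (A b c d t : ℝ) : ℝ :=
  d + A / 4 * (2 * t + 1) + c / 2 * Real.log (1 + 1 / t) - b * √(t * (t + 1))

noncomputable def psiDerivNum (A b c s : ℝ) : ℝ := A * s - c - b * √(s * (4 * s + 1))

def psiQuad (A b c s : ℝ) : ℝ := (A ^ 2 - 4 * b ^ 2) * s ^ 2 + -(2 * A * c + b ^ 2) * s + c ^ 2

section DerivNumSign

variable {A b c sp s : ℝ}

private lemma sq_sub_sq_psiDerivNum (hs : 0 ≤ s) :
    (A * s - c) ^ 2 - (b * √(s * (4 * s + 1))) ^ 2 = psiQuad A b c s := by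
  rw [mul_pow, sq_sqrt (by positivity), psiQuad]
  ring

private lemma psiQuad_div_neg (hb : 0 < b) (hA : 0 < A) (hc : 0 < c) :
    psiQuad A b c (c / A) < 0 := by
  rw [← sq_sub_sq_psiDerivNum (by positivity), mul_div_cancel₀ c hA.ne', sub_self]
  have : 0 < b * √(c / A * (4 * (c / A) + 1)) := by positivity
  nlinarith

theorem psiDerivNum_neg (hb : 0 < b) (hbA : 2 * b < A) (hc : 0 < c)
    (hroot : psiQuad A b c sp = 0) (hs : 0 < s) (hsp : s < sp) : psiDerivNum A b c s < 0 := by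
  have hA : 0 < A := by linarith
  have hS : 0 < b * √(s * (4 * s + 1)) := by positivity
  rw [psiDerivNum]
  rcases le_or_gt (A * s) c with hle | hgt
  · linarith
  · have hQ := quadratic_neg_of_le_of_lt_root (p := c / A) (by nlinarith)
      (psiQuad_div_neg hb hA hc) hroot (by rw [div_le_iff₀ hA]; linarith) hsp
    rw [← psiQuad, ← sq_sub_sq_psiDerivNum hs.le] at hQ
    linarith [lt_of_pow_lt_pow_left₀ 2 hS.le (by linarith : (A * s - c) ^ 2 < _)]

theorem psiDerivNum_pos (hb : 0 < b) (hbA : 2 * b < A) (hc : 0 < c)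
    (hroot : psiQuad A b c sp = 0) (hpos : c < A * sp) (hsp : sp < s) :
    0 < psiDerivNum A b c s := by
  have hA : 0 < A := by linarith
  have hcs : c < A * s := hpos.trans (mul_lt_mul_of_pos_left hsp hA)
  have hQ := quadratic_pos_of_root_lt (p := c / A) (by nlinarith) (psiQuad_div_neg hb hA hc)
    hroot (by rw [div_le_iff₀ hA]; linarith) hsp
  have hs : 0 ≤ s := by nlinarith
  rw [← psiQuad, ← sq_sub_sq_psiDerivNum hs] at hQ
  have hQ' : (b * √(s * (4 * s + 1))) ^ 2 < (A * s - c) ^ 2 := by linarith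
  rw [psiDerivNum]
  linarith [lt_of_pow_lt_pow_left₀ 2 (by linarith) hQ']

end DerivNumSign

section Psi

variable {A b c d t : ℝ}

theorem hasDerivAt_psi (ht : 0 < t) :
    HasDerivAt (psi A b c d) (psiDerivNum A b c (t * (t + 1)) / (2 * (t * (t + 1)))) t := by
  have hs : 0 < t * (t + 1) := by positivity
  have hlog : HasDerivAt (fun x : ℝ => Real.log (1 + 1 / x)) (-(t ^ 2)⁻¹ / (1 + 1 / t)) t := by
    simp only [one_div]
    exact ((hasDerivAt_inv ht.ne').const_add 1).log (by positivity)
  have hsqrt :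
      HasDerivAt (fun x : ℝ => √(x * (x + 1))) ((2 * t + 1) / (2 * √(t * (t + 1)))) t :=
    (((hasDerivAt_id t).mul ((hasDerivAt_id t).add_const 1)).congr_deriv
      (by simp; ring)).sqrt hs.ne'
  have hlin : HasDerivAt (fun x : ℝ => d + A / 4 * (2 * x + 1)) (A / 2) t :=
    ((((hasDerivAt_id t).const_mul 2).add_const 1).const_mul (A / 4)).const_add d
      |>.congr_deriv (by ring)
  refine ((hlin.add (hlog.const_mul (c / 2))).sub (hsqrt.const_mul b)).congr_deriv ?_
  have hroot : √(t * (t + 1) * (4 * (t * (t + 1)) + 1)) = (2 * t + 1) * √(t * (t + 1)) := by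
    rw [show 4 * (t * (t + 1)) + 1 = (2 * t + 1) ^ 2 by ring, sqrt_mul hs.le,
      sqrt_sq (by positivity), mul_comm]
  have hS : √(t * (t + 1)) ^ 2 = t * (t + 1) := sq_sqrt hs.le
  rw [psiDerivNum, hroot]
  field_simp
  linear_combination (b * (2 * t + 1)) * hS

theorem psi_lt_of_ne {sp t₀ : ℝ} (hb : 0 < b) (hbA : 2 * b < A) (hc : 0 < c)
    (hroot : psiQuad A b c sp = 0) (hpos : c < A * sp) (ht₀ : 0 < t₀)
    (ht₀sp : t₀ * (t₀ + 1) = sp) (ht : 0 < t) (hne : t ≠ t₀) :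
    psi A b c d t₀ < psi A b c d t := by
  refine lt_of_hasDerivAt_neg_of_pos ht₀ (fun x hx => hasDerivAt_psi hx) (fun x hx hxt => ?_)
    (fun x hxt => ?_) ht hne
  · exact div_neg_of_neg_of_pos
      (psiDerivNum_neg hb hbA hc hroot (by positivity) (by nlinarith)) (by positivity)
  · have hx : 0 < x := ht₀.trans hxt
    exact div_pos (psiDerivNum_pos hb hbA hc hroot hpos (by nlinarith)) (by positivity)

end Psi

theorem stmt17_general (a L vmin da : ℝ) (ha : 0 < a) (hL : 2 * a < L)
    (hvmin : vmin < 0)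
    (Ψa : ℝ → ℝ)
    (hΨa : ∀ t, Ψa t = da + (a ^ 2 + L ^ 2) / 4 * (2 * t + 1) +
      |vmin| / 2 * Real.log (1 + 1 / t) - L * a * Real.sqrt (t * (t + 1)))
    (sp : ℝ) (hsp : 0 < sp)
    (hroot : (L ^ 2 - a ^ 2) ^ 2 * sp ^ 2
      - (2 * (L ^ 2 + a ^ 2) * |vmin| + L ^ 2 * a ^ 2) * sp + |vmin| ^ 2 = 0)
    (hpos : 0 < (L ^ 2 + a ^ 2) * sp - |vmin|) :
    IsMinOn Ψa (Set.Ioi 0) (-(1/2) + Real.sqrt (1/4 + sp)) ∧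
    ∀ t ∈ Set.Ioi (0:ℝ), IsMinOn Ψa (Set.Ioi 0) t →
      t = -(1/2) + Real.sqrt (1/4 + sp) := by
  set t₀ := -(1/2) + √(1/4 + sp) with ht₀def
  have hsqrt : √(1/4 + sp) ^ 2 = 1/4 + sp := sq_sqrt (by positivity)
  have hsqrt_gt : 1/2 < √(1/4 + sp) := by nlinarith [sqrt_nonneg (1/4 + sp)]
  have ht₀ : 0 < t₀ := by linarith
  have ht₀sp : t₀ * (t₀ + 1) = sp := by rw [ht₀def]; linear_combination hsqrt
  have hΨ : Ψa = psi (a ^ 2 + L ^ 2) (L * a) |vmin| da := funext hΨa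
  have hlt : ∀ t ∈ Ioi (0:ℝ), t ≠ t₀ → Ψa t₀ < Ψa t := fun t ht hne => by
    rw [hΨ]
    exact psi_lt_of_ne (mul_pos (by linarith) ha) (by nlinarith) (abs_pos.2 hvmin.ne)
      (by rw [psiQuad]; linear_combination hroot) (by linarith) ht₀ ht₀sp ht hne
  refine ⟨isMinOn_iff.2 fun t ht => ?_, fun t ht hmin => ?_⟩
  · rcases eq_or_ne t t₀ with rfl | hne
    exacts [le_rfl, (hlt t ht hne).le]
  · by_contra hne
    exact (hlt t ht hne).not_ge (isMinOn_iff.1 hmin t₀ ht₀)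

/-- `t ↦ Ψ(a,t)` attains its minimum on `(0,∞)` exactly at
`t_a = -1/2 + √(1/4 + s₊)`, where `s₊` is the unique positive root of the quadratic
`(L²-a²)²s² - (2(L²+a²)|v| + L²a²)s + |v|² = 0` with `(L²+a²)s - |v| > 0`. -/
theorem stmt17 (a L vmin da : ℝ) (ha : 0 < a) (hL : 2 * a < L)
    (hvmin : vmin < 0) (hda : 0 ≤ da)
    (Ψa : ℝ → ℝ)
    (hΨa : ∀ t, Ψa t = da + (a ^ 2 + L ^ 2) / 4 * (2 * t + 1) +
      |vmin| / 2 * Real.log (1 + 1 / t) - L * a * Real.sqrt (t * (t + 1)))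
    (sp : ℝ) (hsp : 0 < sp)
    (hroot : (L ^ 2 - a ^ 2) ^ 2 * sp ^ 2
      - (2 * (L ^ 2 + a ^ 2) * |vmin| + L ^ 2 * a ^ 2) * sp + |vmin| ^ 2 = 0)
    (hpos : 0 < (L ^ 2 + a ^ 2) * sp - |vmin|) :
    IsMinOn Ψa (Set.Ioi 0) (-(1/2) + Real.sqrt (1/4 + sp)) ∧
    ∀ t ∈ Set.Ioi (0:ℝ), IsMinOn Ψa (Set.Ioi 0) t →
      t = -(1/2) + Real.sqrt (1/4 + sp) :=
  stmt17_general a L vmin da ha hL hvmin Ψa hΨa sp hsp hroot hpos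
end

section
/- Let Ŝ^β = inf_{0<r<a} ( Lr/2 + ∫₀^{L−r} √(ρ²/4 + β^{−2}(v₀(ρ)−v₀^min)) dρ + ∫₀^r √(ρ²/4 + β^{−2}(v₀(ρ)−v₀^min)) dρ ). Then lim_{β→0⁺} β·Ŝ^β = 2∫₀^a √(v₀(ρ)−v₀^min) dρ + (L−2a)√(|v₀^min|) = 2∫₀^{L/2} √(v₀(ρ)−v₀^min) dρ. -/
open Real Set Filter intervalIntegral

/-!
With `w = √(v₀ - v₀^min)`, the substitution `β · √(ρ²/4 + β⁻² u) = √((βρ/2)² + u)` squeezes the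
rescaled integrand between `w ρ` and `βρ/2 + w ρ`, so `β` times the action at `r` differs from
`∫₀^{L-r} w + ∫₀^r w` by at most `β L²`. Since `w ≡ √|v₀^min|` on `[a, ∞)` and `0 ≤ w ≤ √|v₀^min|`,
that sum lies between `T = 2 ∫₀^a w + (L - 2a) √|v₀^min|` and `T + (a - r) √|v₀^min|`; letting
`r → a⁻` gives `T ≤ β Ŝ^β ≤ T + β L²`.
-/

noncomputable def agmonIntegral (u : ℝ → ℝ) (β b : ℝ) : ℝ :=
  ∫ ρ in (0:ℝ)..b, √(ρ ^ 2 / 4 + β⁻¹ ^ 2 * u ρ)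

/-- `Ŝ^β` is the infimum of `agmonAction (v₀ - v₀^min) L β` over `r ∈ (0, a)`. -/
noncomputable def agmonAction (u : ℝ → ℝ) (L β r : ℝ) : ℝ :=
  L * r / 2 + agmonIntegral u β (L - r) + agmonIntegral u β r

theorem mul_sqrt_add_inv_sq_mul {β : ℝ} (hβ : 0 < β) (x y : ℝ) :
    β * √(x + β⁻¹ ^ 2 * y) = √(β ^ 2 * x + y) := by
  calc β * √(x + β⁻¹ ^ 2 * y) = √(β ^ 2) * √(x + β⁻¹ ^ 2 * y) := by rw [sqrt_sq hβ.le]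
    _ = √(β ^ 2 * (x + β⁻¹ ^ 2 * y)) := (sqrt_mul (sq_nonneg β) _).symm
    _ = √(β ^ 2 * x + y) := by congr 1; field_simp

theorem sqrt_sq_add_le_add_sqrt {c : ℝ} (hc : 0 ≤ c) (y : ℝ) : √(c ^ 2 + y) ≤ c + √y :=
  (sqrt_le_left (by positivity)).2 <| by
    nlinarith [sq_sqrt' (x := y), le_max_left y 0, sqrt_nonneg y]

section

variable {u : ℝ → ℝ} {β b : ℝ}

theorem integral_sqrt_le_mul_agmonIntegral (hu : Continuous u) (hβ : 0 < β) (hb : 0 ≤ b) :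
    ∫ ρ in (0:ℝ)..b, √(u ρ) ≤ β * agmonIntegral u β b := by
  rw [agmonIntegral, ← integral_const_mul]
  refine integral_mono_on hb (hu.sqrt.intervalIntegrable _ _)
    ((by fun_prop : Continuous fun ρ => β * √(ρ ^ 2 / 4 + β⁻¹ ^ 2 * u ρ)).intervalIntegrable _ _)
    fun ρ _ => ?_
  rw [mul_sqrt_add_inv_sq_mul hβ]
  exact sqrt_le_sqrt (le_add_of_nonneg_left (by positivity))

theorem mul_agmonIntegral_le (hu : Continuous u) (hβ : 0 < β) (hb : 0 ≤ b) :
    β * agmonIntegral u β b ≤ (∫ ρ in (0:ℝ)..b, √(u ρ)) + β * b ^ 2 / 4 := by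
  have hlin : ∫ ρ in (0:ℝ)..b, β * ρ / 2 = β * b ^ 2 / 4 := by
    rw [integral_div, integral_const_mul, integral_id]
    ring
  calc β * agmonIntegral u β b = ∫ ρ in (0:ℝ)..b, β * √(ρ ^ 2 / 4 + β⁻¹ ^ 2 * u ρ) :=
        (integral_const_mul _ _).symm
    _ ≤ ∫ ρ in (0:ℝ)..b, (β * ρ / 2 + √(u ρ)) := by
        refine integral_mono_on hb ((by fun_prop : Continuous _).intervalIntegrable _ _)
          ((by fun_prop : Continuous _).intervalIntegrable _ _) fun ρ hρ => ?_
        rw [mul_sqrt_add_inv_sq_mul hβ]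
        convert sqrt_sq_add_le_add_sqrt (c := β * ρ / 2) (by nlinarith [hρ.1]) (u ρ) using 2
        ring
    _ = (∫ ρ in (0:ℝ)..b, √(u ρ)) + β * b ^ 2 / 4 := by
        rw [integral_add ((by fun_prop : Continuous _).intervalIntegrable _ _)
          (hu.sqrt.intervalIntegrable _ _), hlin, add_comm]

end

section

variable {w : ℝ → ℝ} {a M : ℝ}

theorem integral_eq_add_mul_of_eq_on_Ici (hw : Continuous w) (hM : ∀ ρ ≥ a, w ρ = M) {b : ℝ}
    (hab : a ≤ b) : ∫ ρ in (0:ℝ)..b, w ρ = (∫ ρ in (0:ℝ)..a, w ρ) + (b - a) * M := by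
  have hconst : ∫ ρ in a..b, w ρ = ∫ _ in a..b, M :=
    integral_congr fun ρ hρ => hM ρ (by rw [uIcc_of_le hab] at hρ; exact hρ.1)
  rw [← integral_add_adjacent_intervals (hw.intervalIntegrable 0 a) (hw.intervalIntegrable a b),
    hconst, integral_const, smul_eq_mul]

theorem integral_add_integral_bounds (hw : Continuous w) (hM : ∀ ρ ≥ a, w ρ = M) {r L : ℝ}
    (hw0 : ∀ ρ ∈ Icc r a, 0 ≤ w ρ) (hwM : ∀ ρ ∈ Icc r a, w ρ ≤ M) (hra : r ≤ a)
    (haL : a ≤ L - r) :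
    2 * (∫ ρ in (0:ℝ)..a, w ρ) + (L - 2 * a) * M ≤
        (∫ ρ in (0:ℝ)..(L - r), w ρ) + ∫ ρ in (0:ℝ)..r, w ρ ∧
      (∫ ρ in (0:ℝ)..(L - r), w ρ) + ∫ ρ in (0:ℝ)..r, w ρ ≤
        2 * (∫ ρ in (0:ℝ)..a, w ρ) + (L - 2 * a) * M + (a - r) * M := by
  have hsplit : ∫ ρ in (0:ℝ)..r, w ρ = (∫ ρ in (0:ℝ)..a, w ρ) - ∫ ρ in r..a, w ρ :=
    eq_sub_of_add_eq (integral_add_adjacent_intervals (hw.intervalIntegrable 0 r)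
      (hw.intervalIntegrable r a))
  have h0 : 0 ≤ ∫ ρ in r..a, w ρ := integral_nonneg hra hw0
  have hle : ∫ ρ in r..a, w ρ ≤ (a - r) * M :=
    calc ∫ ρ in r..a, w ρ ≤ ∫ _ in r..a, M :=
          integral_mono_on hra (hw.intervalIntegrable r a) intervalIntegrable_const hwM
      _ = (a - r) * M := by rw [integral_const, smul_eq_mul]
  rw [integral_eq_add_mul_of_eq_on_Ici hw hM haL, hsplit]
  constructor <;> linarith

end

theorem agmonAction_bounds {u : ℝ → ℝ} {a L M β r : ℝ} (hu : Continuous u)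
    (hM : ∀ ρ ≥ a, √(u ρ) = M) (hle : ∀ ρ ≥ 0, √(u ρ) ≤ M) (hβ : 0 < β) (hr : r ∈ Ioo 0 a)
    (hL : 2 * a < L) :
    2 * (∫ ρ in (0:ℝ)..a, √(u ρ)) + (L - 2 * a) * M ≤ β * agmonAction u L β r ∧
      β * agmonAction u L β r ≤
        2 * (∫ ρ in (0:ℝ)..a, √(u ρ)) + (L - 2 * a) * M + (a - r) * M + β * L ^ 2 := by
  obtain ⟨hr0, hra⟩ := hr
  obtain ⟨hlow, hup⟩ := integral_add_integral_bounds hu.sqrt hM (fun ρ _ => sqrt_nonneg _)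
    (fun ρ hρ => hle ρ (hr0.le.trans hρ.1)) hra.le (L := L) (by linarith)
  have h1 := integral_sqrt_le_mul_agmonIntegral hu hβ (b := L - r) (by linarith)
  have h2 := integral_sqrt_le_mul_agmonIntegral hu hβ hr0.le
  have h3 := mul_agmonIntegral_le hu hβ (b := L - r) (by linarith)
  have h4 := mul_agmonIntegral_le hu hβ hr0.le
  have hquad : β * (L * r / 2) + β * (L - r) ^ 2 / 4 + β * r ^ 2 / 4 ≤ β * L ^ 2 := by
    nlinarith
  have hL0 : 0 < L := by linarith
  have hpos : 0 ≤ β * (L * r / 2) := by positivity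
  rw [agmonAction, mul_add, mul_add]
  constructor <;> linarith

theorem csInf_image_le_of_tendsto {α β : Type*} [ConditionallyCompleteLinearOrder β]
    [TopologicalSpace β] [ClosedIciTopology β] {l : Filter α} [l.NeBot] {s : Set α}
    {φ g : α → β} {c : β} (hbdd : BddBelow (φ '' s)) (hs : s ∈ l) (hφg : ∀ x ∈ s, φ x ≤ g x)
    (hg : Tendsto g l (nhds c)) : sInf (φ '' s) ≤ c :=
  ge_of_tendsto hg <| eventually_of_mem hs fun x hx =>
    (csInf_le hbdd (mem_image_of_mem φ hx)).trans (hφg x hx)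

theorem Real.mul_sInf_image_of_nonneg {α : Type*} {β : ℝ} (hβ : 0 ≤ β) (f : α → ℝ)
    (s : Set α) : β * sInf (f '' s) = sInf ((fun x => β * f x) '' s) := by
  rw [← smul_eq_mul, ← Real.sInf_smul_of_nonneg hβ, ← image_smul, image_image]
  rfl

theorem tendsto_nhdsGT_of_le_of_le_add_mul {f : ℝ → ℝ} {T C : ℝ}
    (h : ∀ β > 0, T ≤ f β ∧ f β ≤ T + β * C) : Tendsto f (nhdsWithin 0 (Ioi 0)) (nhds T) := by
  have hlin : Tendsto (fun β => T + β * C) (nhdsWithin 0 (Ioi 0)) (nhds T) := by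
    simpa using ((by fun_prop : Continuous fun β : ℝ => T + β * C).tendsto 0).mono_left
      nhdsWithin_le_nhds
  exact tendsto_of_tendsto_of_tendsto_of_le_of_le' tendsto_const_nhds hlin
    (eventually_nhdsWithin_of_forall fun β hβ => (h β hβ).1)
    (eventually_nhdsWithin_of_forall fun β hβ => (h β hβ).2)

theorem stmt18_general (v₀ : ℝ → ℝ) (vmin : ℝ) (a L : ℝ)
    (hcont : Continuous v₀)
    (hneg : ∀ r ≥ (0:ℝ), v₀ r ≤ 0)
    (hvmin : vmin < 0)
    (hsupp : ∀ r ≥ a, v₀ r = 0)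
    (ha : 0 < a) (hL : 2 * a < L)
    (Sβ : ℝ → ℝ)
    (hSβ : ∀ β, Sβ β = sInf {x : ℝ | ∃ r ∈ Set.Ioo (0:ℝ) a,
      x = L * r / 2 +
        (∫ ρ in (0:ℝ)..(L - r), Real.sqrt (ρ ^ 2 / 4 + β⁻¹ ^ 2 * (v₀ ρ - vmin))) +
        (∫ ρ in (0:ℝ)..r, Real.sqrt (ρ ^ 2 / 4 + β⁻¹ ^ 2 * (v₀ ρ - vmin)))}) :
    Filter.Tendsto (fun β => β * Sβ β) (nhdsWithin 0 (Set.Ioi 0))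
      (nhds (2 * (∫ ρ in (0:ℝ)..a, Real.sqrt (v₀ ρ - vmin)) +
        (L - 2 * a) * Real.sqrt |vmin|)) ∧
    2 * (∫ ρ in (0:ℝ)..a, Real.sqrt (v₀ ρ - vmin)) + (L - 2 * a) * Real.sqrt |vmin| =
      2 * ∫ ρ in (0:ℝ)..(L / 2), Real.sqrt (v₀ ρ - vmin) := by
  have hu : Continuous fun ρ => v₀ ρ - vmin := by fun_prop
  have hM : ∀ ρ ≥ a, √(v₀ ρ - vmin) = √|vmin| := fun ρ hρ => by
    rw [hsupp ρ hρ, zero_sub, abs_of_neg hvmin]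
  have hle : ∀ ρ ≥ 0, √(v₀ ρ - vmin) ≤ √|vmin| := fun ρ hρ =>
    sqrt_le_sqrt (by rw [abs_of_neg hvmin]; linarith [hneg ρ hρ])
  refine ⟨tendsto_nhdsGT_of_le_of_le_add_mul (C := L ^ 2) fun β hβ => ?_, ?_⟩
  · have hS : Sβ β = sInf (agmonAction (fun ρ => v₀ ρ - vmin) L β '' Ioo 0 a) := by
      rw [hSβ]
      congr 1
      ext x
      exact exists_congr fun r => and_congr_right fun _ => ⟨Eq.symm, Eq.symm⟩
    have hb := fun r (hr : r ∈ Ioo 0 a) => agmonAction_bounds hu hM hle hβ hr hL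
    rw [hS, Real.mul_sInf_image_of_nonneg hβ.le]
    refine ⟨le_csInf ((nonempty_Ioo.2 ha).image _) (forall_mem_image.2 fun r hr => (hb r hr).1),
      csInf_image_le_of_tendsto ⟨_, forall_mem_image.2 fun r hr => (hb r hr).1⟩
        (Ioo_mem_nhdsLT ha) (fun r hr => (hb r hr).2) ?_⟩
    refine tendsto_nhdsWithin_of_tendsto_nhds ?_
    simpa using (by fun_prop : Continuous fun r : ℝ =>
      2 * (∫ ρ in (0:ℝ)..a, √(v₀ ρ - vmin)) + (L - 2 * a) * √|vmin| + (a - r) * √|vmin| +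
        β * L ^ 2).tendsto a
  · rw [integral_eq_add_mul_of_eq_on_Ici hu.sqrt hM (b := L / 2) (by linarith)]
    ring

/-- the scaled constant `β·Ŝ^β` tends, as `β → 0⁺`, to the non-magnetic
Agmon distance `2∫₀^a √(v₀-v₀^min) + (L-2a)√|v₀^min| = 2∫₀^{L/2} √(v₀-v₀^min)`. -/
theorem stmt18 (v₀ : ℝ → ℝ) (vmin : ℝ) (a L : ℝ)
    (hcont : Continuous v₀)
    (hneg : ∀ r ≥ (0:ℝ), v₀ r ≤ 0)
    (hmin : ∀ r ≥ (0:ℝ), vmin ≤ v₀ r) (hvmin : vmin < 0)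
    (hsupp : ∀ r ≥ a, v₀ r = 0)
    (ha : 0 < a) (hL : 2 * a < L)
    (Sβ : ℝ → ℝ)
    (hSβ : ∀ β, Sβ β = sInf {x : ℝ | ∃ r ∈ Set.Ioo (0:ℝ) a,
      x = L * r / 2 +
        (∫ ρ in (0:ℝ)..(L - r), Real.sqrt (ρ ^ 2 / 4 + β⁻¹ ^ 2 * (v₀ ρ - vmin))) +
        (∫ ρ in (0:ℝ)..r, Real.sqrt (ρ ^ 2 / 4 + β⁻¹ ^ 2 * (v₀ ρ - vmin)))}) :
    Filter.Tendsto (fun β => β * Sβ β) (nhdsWithin 0 (Set.Ioi 0))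
      (nhds (2 * (∫ ρ in (0:ℝ)..a, Real.sqrt (v₀ ρ - vmin)) +
        (L - 2 * a) * Real.sqrt |vmin|)) ∧
    2 * (∫ ρ in (0:ℝ)..a, Real.sqrt (v₀ ρ - vmin)) + (L - 2 * a) * Real.sqrt |vmin| =
      2 * ∫ ρ in (0:ℝ)..(L / 2), Real.sqrt (v₀ ρ - vmin) :=
  stmt18_general v₀ vmin a L hcont hneg hvmin hsupp ha hL Sβ hSβ
end

section
/- Define i(a,L,v) = Ψ-interaction term given explicitly by i(a,L,v) = f(a,L,v) − g(a,v) with f(a,L,v) = ((a²+L²)/4)(2t+1) + (|v|/2)ln(1+1/t) − La√(t(t+1)) evaluated at t = t(a,L,v) (as in the minimization of Ψ at r = a), and g(a,v) = (a/4)√(a²+4|v|) + |v|·ln( (√(a²+4|v|)+a)²/(4|v|) ). Then lim_{a→0⁺} i(a,L,v) = (L/4)√(L²+4|v|) + |v|·ln( L(1+√(1+4|v|/L²)) / (2√|v|) ) = ∫₀^L √(ρ²/4 + |v|) dρ. -/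
open Real Filter intervalIntegral

/-!
Write `c = |v|`. All of `s`, `t`, `f`, `g` are continuous at `a = 0`: the denominators
`L² - a²` do not vanish there, `t 0 > 0`, and the argument of the logarithm in `g` is positive
for every `a`. So the limit is `f 0 - g 0 = f 0`. At `a = 0` the square root in `s` vanishes, so
`s 0 = c / L²` and `2 t 0 + 1 = √(L² + 4c) / L`; then `1 + 1 / t 0 = ((L + √(L² + 4c)) / (2√c))²`
is a perfect square, which puts `f 0` in closed form. The integral identity is the fundamental
theorem of calculus for the primitive `ρ / 4 * √(ρ² + 4c) + c * log (ρ + √(ρ² + 4c))`.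
-/

lemma add_sqrt_sq_add_pos {d : ℝ} (hd : 0 < d) (x : ℝ) : 0 < x + √(x ^ 2 + d) := by
  have : |x| < √(x ^ 2 + d) := by
    rw [← sqrt_sq_eq_abs]
    exact sqrt_lt_sqrt (sq_nonneg x) (by linarith)
  linarith [neg_abs_le x]

lemma mul_sqrt_div_sq {L : ℝ} (hL : 0 < L) (x : ℝ) : L * √(x / L ^ 2) = √x := by
  rw [sqrt_div' _ (sq_nonneg L), sqrt_sq hL.le]
  field_simp

lemma sqrt_four_mul (c : ℝ) : √(4 * c) = 2 * √c := by
  rw [sqrt_mul (by norm_num), show (4 : ℝ) = 2 ^ 2 by norm_num, sqrt_sq (by norm_num)]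

lemma hasDerivAt_primitive_sqrt_sq_div_four_add {c : ℝ} (hc : 0 < c) (x : ℝ) :
    HasDerivAt (fun ρ ↦ ρ / 4 * √(ρ ^ 2 + 4 * c) + c * log (ρ + √(ρ ^ 2 + 4 * c)))
      (√(x ^ 2 / 4 + c)) x := by
  have hS : 0 < x ^ 2 + 4 * c := by positivity
  set r := √(x ^ 2 + 4 * c)
  have hr : 0 < r := sqrt_pos.mpr hS
  have hr2 : r ^ 2 = x ^ 2 + 4 * c := sq_sqrt hS.le
  have hsqrt : HasDerivAt (fun ρ ↦ √(ρ ^ 2 + 4 * c)) (2 * x / (2 * r)) x := by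
    refine HasDerivAt.sqrt ?_ hS.ne'
    simpa using (hasDerivAt_pow 2 x).add_const (4 * c)
  have hxr : 0 < x + r := add_sqrt_sq_add_pos (by positivity) x
  have hprod : HasDerivAt (fun ρ ↦ ρ / 4 * √(ρ ^ 2 + 4 * c))
      (1 / 4 * r + x / 4 * (2 * x / (2 * r))) x :=
    ((hasDerivAt_id x).div_const 4).mul hsqrt
  have hlog : HasDerivAt (fun ρ ↦ c * log (ρ + √(ρ ^ 2 + 4 * c)))
      (c * ((1 + 2 * x / (2 * r)) / (x + r))) x :=
    (((hasDerivAt_id x).add hsqrt).log hxr.ne').const_mul c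
  have hvalue : √(x ^ 2 / 4 + c) = r / 2 := by
    rw [show x ^ 2 / 4 + c = (r / 2) ^ 2 by rw [div_pow, hr2]; ring, sqrt_sq (by positivity)]
  refine (hprod.add hlog).congr_deriv ?_
  rw [hvalue]
  field_simp
  linear_combination (-2 * (x + r)) * hr2

theorem integral_sqrt_sq_div_four_add (L : ℝ) {c : ℝ} (hc : 0 < c) :
    ∫ ρ in (0 : ℝ)..L, √(ρ ^ 2 / 4 + c) =
      L / 4 * √(L ^ 2 + 4 * c) + c * log ((L + √(L ^ 2 + 4 * c)) / (2 * √c)) := by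
  rw [integral_eq_sub_of_hasDerivAt (fun x _ ↦ hasDerivAt_primitive_sqrt_sq_div_four_add hc x)
    ((by fun_prop : Continuous fun ρ : ℝ ↦ √(ρ ^ 2 / 4 + c)).intervalIntegrable 0 L),
    log_div (add_sqrt_sq_add_pos (by positivity) L).ne' (by positivity)]
  simp only [zero_pow two_ne_zero, zero_add, zero_div, zero_mul, sqrt_four_mul]
  ring

-- The functions `s`, `t`, `f`, `g` of the minimization of `Ψ` at `r = a`, written with `c = |v|`.
namespace Interaction

variable (L c : ℝ)

noncomputable def s (a : ℝ) : ℝ :=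
  (2 * c * (L ^ 2 + a ^ 2) + L ^ 2 * a ^ 2) / (2 * (L ^ 2 - a ^ 2) ^ 2) +
    (1 / (L ^ 2 - a ^ 2)) * √((2 * c * (L ^ 2 + a ^ 2) + L ^ 2 * a ^ 2) ^ 2 /
      (4 * (L ^ 2 - a ^ 2) ^ 2) - c ^ 2)

noncomputable def t (a : ℝ) : ℝ := -(1 / 2) + √(1 / 4 + s L c a)

noncomputable def f (a : ℝ) : ℝ :=
  (a ^ 2 + L ^ 2) / 4 * (2 * t L c a + 1) + c / 2 * log (1 + 1 / t L c a) -
    L * a * √(t L c a * (t L c a + 1))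

noncomputable def g (a : ℝ) : ℝ :=
  a / 4 * √(a ^ 2 + 4 * c) + c * log ((√(a ^ 2 + 4 * c) + a) ^ 2 / (4 * c))

variable {L c}

lemma continuousAt_s (hL : L ≠ 0) : ContinuousAt (s L c) 0 := by
  unfold s
  fun_prop (disch := simp [hL])

lemma s_zero (hL : L ≠ 0) : s L c 0 = c / L ^ 2 := by
  have hradicand : (2 * c * (L ^ 2 + 0 ^ 2) + L ^ 2 * 0 ^ 2) ^ 2 /
      (4 * (L ^ 2 - 0 ^ 2) ^ 2) - c ^ 2 = 0 := by
    field_simp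
    ring
  rw [s, hradicand, sqrt_zero, mul_zero, add_zero]
  field_simp
  ring

lemma continuousAt_t (hL : L ≠ 0) : ContinuousAt (t L c) 0 := by
  have := continuousAt_s (c := c) hL
  unfold t
  fun_prop

lemma two_mul_t_zero_add_one (hL : 0 < L) : 2 * t L c 0 + 1 = √(L ^ 2 + 4 * c) / L := by
  have hquarter : 1 / 4 + c / L ^ 2 = (L ^ 2 + 4 * c) / (2 * L) ^ 2 := by
    field_simp
    ring
  rw [t, s_zero hL.ne', hquarter, sqrt_div' _ (sq_nonneg _), sqrt_sq (by positivity)]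
  field_simp
  ring

lemma t_zero_pos (hL : 0 < L) (hc : 0 < c) : 0 < t L c 0 := by
  have hlt : 1 < √(L ^ 2 + 4 * c) / L := by
    rw [one_lt_div hL, lt_sqrt hL.le]
    linarith
  linarith [two_mul_t_zero_add_one (c := c) hL]

lemma continuousAt_f (hL : 0 < L) (hc : 0 < c) : ContinuousAt (f L c) 0 := by
  have := continuousAt_t (c := c) hL.ne'
  have ht0 : 0 < t L c 0 := t_zero_pos hL hc
  have : t L c 0 ≠ 0 := ht0.ne'
  have : 1 + 1 / t L c 0 ≠ 0 := (add_pos one_pos (one_div_pos.mpr ht0)).ne'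
  unfold f
  fun_prop (disch := assumption)

lemma continuous_g (hc : 0 < c) : Continuous (g c) := by
  have hpos (a : ℝ) : 0 < (√(a ^ 2 + 4 * c) + a) ^ 2 / (4 * c) := by
    have := add_sqrt_sq_add_pos (by positivity : 0 < 4 * c) a
    exact div_pos (pow_pos (by linarith) 2) (by positivity)
  unfold g
  fun_prop (disch := exact fun a ↦ (hpos a).ne')

lemma g_zero (hc : 0 < c) : g c 0 = 0 := by
  have : (√(0 ^ 2 + 4 * c) + 0) ^ 2 / (4 * c) = 1 := by
    rw [add_zero, sq_sqrt (by positivity), zero_pow two_ne_zero, zero_add, div_self (by positivity)]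
  rw [g, this]
  simp

lemma f_zero (hL : 0 < L) (hc : 0 < c) :
    f L c 0 = L / 4 * √(L ^ 2 + 4 * c) + c * log ((L + √(L ^ 2 + 4 * c)) / (2 * √c)) := by
  set r := √(L ^ 2 + 4 * c)
  have hr2 : r ^ 2 = L ^ 2 + 4 * c := sq_sqrt (by positivity)
  have ht0 : t L c 0 = (r - L) / (2 * L) := by
    have h := two_mul_t_zero_add_one (c := c) hL
    rw [eq_div_iff hL.ne'] at h
    rw [eq_div_iff (by positivity)]
    linarith
  have hrL : r - L ≠ 0 := (sub_pos.mpr ((lt_sqrt hL.le).mpr (by linarith))).ne'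
  -- `1 + 1 / t 0 = (r + L) / (r - L) = (r + L)² / (r² - L²)` and `r² - L² = 4c`.
  have hsquare : 1 + 1 / t L c 0 = ((L + r) / (2 * √c)) ^ 2 := by
    rw [ht0, div_pow, mul_pow, sq_sqrt hc.le]
    field_simp
    linear_combination (-(L + r)) * hr2
  rw [f, hsquare, log_pow, two_mul_t_zero_add_one hL]
  field_simp [hL.ne']
  ring

lemma tendsto_f_sub_g (hL : 0 < L) (hc : 0 < c) :
    Tendsto (fun a ↦ f L c a - g c a) (nhds 0)
      (nhds (L / 4 * √(L ^ 2 + 4 * c) + c * log ((L + √(L ^ 2 + 4 * c)) / (2 * √c)))) := by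
  have := ((continuousAt_f hL hc).sub (continuous_g hc).continuousAt).tendsto
  rwa [Pi.sub_apply, f_zero hL hc, g_zero hc, sub_zero] at this

end Interaction

/-- limit of the interaction term `i(a,L,v) = f(a,L,v) - g(a,v)`
as `a → 0⁺`, equal to `∫₀^L √(ρ²/4 + |v|)dρ`. -/
theorem stmt19 (L v : ℝ) (hL : 0 < L) (hv : v < 0)
    (s t f g i : ℝ → ℝ)
    (hs : ∀ a, s a = (2 * |v| * (L ^ 2 + a ^ 2) + L ^ 2 * a ^ 2) /
        (2 * (L ^ 2 - a ^ 2) ^ 2) +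
      (1 / (L ^ 2 - a ^ 2)) * Real.sqrt
        ((2 * |v| * (L ^ 2 + a ^ 2) + L ^ 2 * a ^ 2) ^ 2 / (4 * (L ^ 2 - a ^ 2) ^ 2)
          - |v| ^ 2))
    (ht : ∀ a, t a = -(1/2) + Real.sqrt (1/4 + s a))
    (hf : ∀ a, f a = (a ^ 2 + L ^ 2) / 4 * (2 * t a + 1) +
      |v| / 2 * Real.log (1 + 1 / t a) - L * a * Real.sqrt (t a * (t a + 1)))
    (hgdef : ∀ a, g a = a / 4 * Real.sqrt (a ^ 2 + 4 * |v|) +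
      |v| * Real.log ((Real.sqrt (a ^ 2 + 4 * |v|) + a) ^ 2 / (4 * |v|)))
    (hi : ∀ a, i a = f a - g a) :
    Filter.Tendsto i (nhdsWithin 0 (Set.Ioi 0))
      (nhds (L / 4 * Real.sqrt (L ^ 2 + 4 * |v|) +
        |v| * Real.log (L * (1 + Real.sqrt (1 + 4 * |v| / L ^ 2)) /
          (2 * Real.sqrt |v|)))) ∧
    L / 4 * Real.sqrt (L ^ 2 + 4 * |v|) +
        |v| * Real.log (L * (1 + Real.sqrt (1 + 4 * |v| / L ^ 2)) /
          (2 * Real.sqrt |v|)) =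
      ∫ ρ in (0:ℝ)..L, Real.sqrt (ρ ^ 2 / 4 + |v|) := by
  have hc : 0 < |v| := abs_pos.mpr hv.ne
  obtain rfl : s = Interaction.s L |v| := funext hs
  obtain rfl : t = Interaction.t L |v| := funext ht
  obtain rfl : f = Interaction.f L |v| := funext hf
  obtain rfl : g = Interaction.g |v| := funext hgdef
  obtain rfl : i = fun a ↦ Interaction.f L |v| a - Interaction.g |v| a := funext hi
  have hclosed : L * (1 + √(1 + 4 * |v| / L ^ 2)) = L + √(L ^ 2 + 4 * |v|) := by
    rw [← mul_sqrt_div_sq hL (L ^ 2 + 4 * |v|), add_div, div_self (by positivity)]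
    ring
  rw [hclosed]
  exact ⟨(Interaction.tendsto_f_sub_g hL hc).mono_left nhdsWithin_le_nhds,
    (integral_sqrt_sq_div_four_add L hc).symm⟩
end
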